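/- arXiv:1411.1739 — 2 statements merged into one kernel-verified Lean document; each statement's English description precedes it below -/
import Mathlib

section
/- Let $w \in L^1(\mathbb{R})$ be a weight supported in $[-\delta, \delta]$, let $(\nu_k)$ be a sequence of real numbers and $s(\nu_k)$ complex coefficients with $\sum_k |s(\nu_k)| < \infty$. Set $S(t) = \sum_k s(\nu_k) e^{2\pi i \nu_k t}$ and $m_{\delta,T} = \min_{|t| \le T} |\widehat{w}(t)|^2$, where $\widehat{w}(y) = \int_{\mathbb{R}} w(t) e^{-2\pi i t y}\,dt$. Then $m_{\delta,T} \int_{-T}^{T} |S(t)|^2\,dt \le \int_{\mathbb{R}} \big|\sum_k s(\nu_k) w(x - \nu_k)\big|^2\,dx$. -/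
/-!
With `F x = ∑ₖ s k * w (x - ν k)`, the Fourier transform of the series of translates is
`𝓕 F (-t) = S t * 𝓕 w (-t)`, so `m * ‖S t‖² ≤ ‖𝓕 F (-t)‖²` for `|t| ≤ T`. Integrating, the left side
is at most `∫ ‖𝓕 F‖²`, which Plancherel bounds by `∫ ‖F‖²`. Plancherel is taken from the `L²`
Fourier transform, after identifying it with the Fourier integral on `L¹ ∩ L²` by testing both
against smooth compactly supported functions.
-/

open MeasureTheory Real Set FourierTransform
open scoped ENNReal RealInnerProductSpace SchwartzMap

theorem MeasureTheory.integrable_tsum {α E ι : Type*} [MeasurableSpace α] {μ : Measure α}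
    [NormedAddCommGroup E] [CompleteSpace E] [Countable ι] {f : ι → α → E}
    (hf : ∀ i, Integrable (f i) μ) (hsum : ∑' i, ∫⁻ a, ‖f i a‖ₑ ∂μ ≠ ∞) :
    Integrable (fun a ↦ ∑' i, f i a) μ := by
  have hL : ∑' i, ‖(hf i).toL1 (f i)‖ₑ ≠ ∞ := by simpa only [Integrable.enorm_toL1] using hsum
  refine (L1.integrable_coeFn (∑' i, (hf i).toL1 (f i))).congr ?_
  filter_upwards [Lp.coeFn_tsum hL, ae_all_iff.2 fun i ↦ (hf i).coeFn_toL1] with a h₁ h₂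
  rw [h₁]
  exact tsum_congr h₂

section Plancherel

variable {V F : Type*} [NormedAddCommGroup V] [InnerProductSpace ℝ V] [FiniteDimensional ℝ V]
  [MeasurableSpace V] [BorelSpace V]
  [NormedAddCommGroup F] [InnerProductSpace ℂ F] [CompleteSpace F]

theorem Real.fourier_toLp_two_ae_eq {f : V → F} (hf : Integrable f) (hf₂ : MemLp f 2) :
    ((𝓕 (hf₂.toLp f) : Lp F 2 volume) : V → F) =ᵐ[volume] 𝓕 f := by
  have hcont : Continuous (𝓕 f) :=
    VectorFourier.fourierIntegral_continuous Real.continuous_fourierChar continuous_inner hf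
  refine ae_eq_of_integral_contDiff_smul_eq ((Lp.memLp _).locallyIntegrable one_le_two)
    hcont.locallyIntegrable fun g hg hgc ↦ ?_
  -- the `L²` transform agrees with the distributional one, which is defined by duality
  let G : 𝓢(V, ℂ) :=
    (hgc.comp_left Complex.ofReal_zero).toSchwartzMap (Complex.ofRealCLM.contDiff.comp hg)
  have hG : ∀ h : V → F, ∫ x, g x • h x = ∫ x, G x • h x := fun h ↦ by congr 1 with x
  calc ∫ x, g x • ((𝓕 (hf₂.toLp f) : Lp F 2 volume) : V → F) x
      = Lp.toTemperedDistribution (𝓕 (hf₂.toLp f)) G := by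
        rw [hG, Lp.toTemperedDistribution_apply]
    _ = Lp.toTemperedDistribution (hf₂.toLp f) (𝓕 G) := by
        rw [← Lp.fourier_toTemperedDistribution_eq]; rfl
    _ = ∫ x, 𝓕 (G : V → ℂ) x • f x := by
        rw [Lp.toTemperedDistribution_apply]
        refine integral_congr_ae ?_
        filter_upwards [hf₂.coeFn_toLp] with x hx
        rw [hx]; rfl
    _ = ∫ ξ, G ξ • 𝓕 f ξ := by
        simpa using! VectorFourier.integral_fourierIntegral_smul_eq_flip (L := innerₗ V)
          Real.continuous_fourierChar continuous_inner G.integrable hf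
    _ = ∫ ξ, g ξ • 𝓕 f ξ := (hG _).symm

theorem Real.eLpNorm_fourier_two_eq {f : V → F} (hf : Integrable f) (hf₂ : MemLp f 2) :
    eLpNorm (𝓕 f) 2 volume = eLpNorm f 2 volume := by
  rw [← eLpNorm_congr_ae (Real.fourier_toLp_two_ae_eq hf hf₂), ← eLpNorm_congr_ae hf₂.coeFn_toLp,
    ← Lp.enorm_def, ← Lp.enorm_def, ← ofReal_norm, ← ofReal_norm, Lp.norm_fourier_eq]

theorem Real.lintegral_enorm_fourier_sq_le {f : V → F} (hf : Integrable f) :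
    ∫⁻ ξ, ‖𝓕 f ξ‖ₑ ^ 2 ≤ ∫⁻ x, ‖f x‖ₑ ^ 2 := by
  have hsq (g : V → F) : ∫⁻ x, ‖g x‖ₑ ^ 2 = eLpNorm g 2 volume ^ (2 : ℝ) := by
    simpa using (eLpNorm_nnreal_pow_eq_lintegral (f := g) (μ := volume) (p := 2) two_ne_zero).symm
  by_cases hf₂ : MemLp f 2
  · rw [hsq, hsq, Real.eLpNorm_fourier_two_eq hf hf₂]
  · have : eLpNorm f 2 volume = ∞ := by
      by_contra h
      exact hf₂ ⟨hf.1, lt_top_iff_ne_top.2 h⟩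
    simp [hsq f, this]

end Plancherel

section Translates

variable {V E ι : Type*} [NormedAddCommGroup V] [InnerProductSpace ℝ V] [FiniteDimensional ℝ V]
  [MeasurableSpace V] [BorelSpace V] [NormedAddCommGroup E] [NormedSpace ℂ E]

theorem Real.fourier_comp_sub_right (f : V → E) (a ξ : V) :
    𝓕 (fun x ↦ f (x - a)) ξ = 𝐞 (-⟪a, ξ⟫) • 𝓕 f ξ := by
  simpa [sub_eq_add_neg] using!
    congrFun (VectorFourier.fourierIntegral_comp_add_right 𝐞 volume (innerₗ V) f (-a)) ξ

variable {s : ι → ℂ} {f : V → E}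

theorem tsum_lintegral_enorm_smul_comp_sub_ne_top (hs : Summable (‖s ·‖)) (hf : Integrable f)
    (ν : ι → V) : ∑' k, ∫⁻ x, ‖s k • f (x - ν k)‖ₑ ≠ ∞ := by
  simp_rw [enorm_smul, lintegral_const_mul' _ _ enorm_ne_top,
    lintegral_sub_right_eq_self (fun x ↦ ‖f x‖ₑ), ENNReal.tsum_mul_right]
  exact ENNReal.mul_ne_top (tsum_enorm_ne_top_iff_summable_norm.2 hs) hf.2.ne

variable [Countable ι]

theorem Real.fourier_tsum {f : ι → V → E} (hf : ∀ i, Integrable (f i))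
    (hsum : ∑' i, ∫⁻ x, ‖f i x‖ₑ ≠ ∞) (ξ : V) :
    𝓕 (fun x ↦ ∑' i, f i x) ξ = ∑' i, 𝓕 (f i) ξ := by
  simp only [Real.fourier_eq]
  rw [← integral_tsum (fun i ↦ ((Real.fourierIntegral_convergent_iff ξ).2 (hf i)).1)]
  · congr 1 with x
    exact (tsum_const_smul' _).symm
  · simpa only [← ofReal_norm, Circle.norm_smul] using hsum

theorem integrable_tsum_smul_comp_sub [CompleteSpace E] (hs : Summable (‖s ·‖))
    (hf : Integrable f) (ν : ι → V) :
    Integrable (fun x ↦ ∑' k, s k • f (x - ν k)) :=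
  integrable_tsum (fun k ↦ (hf.comp_sub_right (ν k)).smul (s k))
    (tsum_lintegral_enorm_smul_comp_sub_ne_top hs hf ν)

theorem Real.fourier_tsum_smul_comp_sub (hs : Summable (‖s ·‖)) (hf : Integrable f)
    (ν : ι → V) (ξ : V) :
    𝓕 (fun x ↦ ∑' k, s k • f (x - ν k)) ξ = (∑' k, 𝐞 (-⟪ν k, ξ⟫) • s k) • 𝓕 f ξ := by
  have hsum : Summable fun k ↦ 𝐞 (-⟪ν k, ξ⟫) • s k :=
    Summable.of_norm (by simpa only [Circle.norm_smul] using hs)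
  rw [Real.fourier_tsum (f := fun k x ↦ s k • f (x - ν k))
    (fun k ↦ (hf.comp_sub_right (ν k)).smul (s k))
    (tsum_lintegral_enorm_smul_comp_sub_ne_top hs hf ν), ← hsum.tsum_smul_const]
  refine tsum_congr fun k ↦ ?_
  rw [smul_assoc, smul_comm, ← Real.fourier_comp_sub_right]
  exact congrFun (VectorFourier.fourierIntegral_const_smul 𝐞 volume (innerₗ V) _ (s k)) ξ

end Translates

theorem Real.fourier_eq_integral_mul_exp (w : ℝ → ℂ) (t : ℝ) :
    𝓕 w t = ∫ u : ℝ, w u * Complex.exp (-(2 * π * Complex.I * u * t)) := by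
  rw [Real.fourier_real_eq_integral_exp_smul]
  congr 1 with u
  rw [smul_eq_mul, mul_comm]
  congr 2
  push_cast
  ring

theorem Real.fourier_tsum_mul_comp_sub_neg {ι : Type*} [Countable ι] {s : ι → ℂ}
    (hs : Summable (‖s ·‖)) {w : ℝ → ℂ} (hw : Integrable w) (ν : ι → ℝ) (t : ℝ) :
    𝓕 (fun x ↦ ∑' k, s k * w (x - ν k)) (-t) =
      (∑' k, s k * Complex.exp (2 * π * Complex.I * ν k * t)) * 𝓕 w (-t) := by
  change 𝓕 (fun x ↦ ∑' k, s k • w (x - ν k)) (-t) = _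
  rw [Real.fourier_tsum_smul_comp_sub hs hw ν, smul_eq_mul]
  congr 1
  refine tsum_congr fun k ↦ ?_
  rw [Circle.smul_def, Real.fourierChar_apply, smul_eq_mul, mul_comm]
  congr 2
  simp only [RCLike.inner_apply, conj_trivial]
  push_cast
  ring

theorem gallagher_generalized_supported_general
    (T : ℝ)
    (w : ℝ → ℂ) (hw : Integrable w)
    (ν : ℕ → ℝ) (s : ℕ → ℂ) (hs : Summable (fun k => ‖s k‖))
    (S : ℝ → ℂ)
    (hS : ∀ t : ℝ, S t = ∑' k, s k * Complex.exp (2 * π * Complex.I * (ν k : ℂ) * (t : ℂ)))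
    (m : ℝ)
    (hm : m = sInf ((fun t : ℝ =>
        ‖∫ u : ℝ, w u * Complex.exp (-(2 * π * Complex.I * (u : ℂ) * (t : ℂ)))‖ ^ 2) ''
        Set.Icc (-T) T)) :
    ENNReal.ofReal m * ∫⁻ t in Set.Icc (-T) T, ENNReal.ofReal (‖S t‖ ^ 2) ≤
      ∫⁻ x : ℝ, ENNReal.ofReal (‖∑' k, s k * w (x - ν k)‖ ^ 2) := by
  set F : ℝ → ℂ := fun x ↦ ∑' k, s k * w (x - ν k)
  have hF : Integrable F := integrable_tsum_smul_comp_sub hs hw ν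
  simp_rw [← Real.fourier_eq_integral_mul_exp] at hm
  have hm_le (t : ℝ) (ht : t ∈ Icc (-T) T) : ENNReal.ofReal m ≤ ‖𝓕 w (-t)‖ₑ ^ 2 := by
    rw [← ofReal_norm, ← ENNReal.ofReal_pow (norm_nonneg _), hm]
    refine ENNReal.ofReal_le_ofReal (csInf_le ⟨0, ?_⟩ ⟨-t, ?_, rfl⟩)
    · rintro _ ⟨u, -, rfl⟩
      positivity
    · exact ⟨by linarith [ht.2], by linarith [ht.1]⟩
  simp_rw [ENNReal.ofReal_pow (norm_nonneg _), ofReal_norm]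
  calc ENNReal.ofReal m * ∫⁻ t in Icc (-T) T, ‖S t‖ₑ ^ 2
      = ∫⁻ t in Icc (-T) T, ENNReal.ofReal m * ‖S t‖ₑ ^ 2 :=
        (lintegral_const_mul' _ _ ENNReal.ofReal_ne_top).symm
    _ ≤ ∫⁻ t in Icc (-T) T, ‖𝓕 F (-t)‖ₑ ^ 2 := by
        refine setLIntegral_mono' measurableSet_Icc fun t ht ↦ ?_
        rw [Real.fourier_tsum_mul_comp_sub_neg hs hw, ← hS, enorm_mul, mul_pow, mul_comm]
        gcongr
        exact hm_le t ht
    _ ≤ ∫⁻ t, ‖𝓕 F (-t)‖ₑ ^ 2 := setLIntegral_le_lintegral _ _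
    _ = ∫⁻ ξ, ‖𝓕 F ξ‖ₑ ^ 2 := lintegral_neg_eq_self (fun ξ ↦ ‖𝓕 F ξ‖ₑ ^ 2)
    _ ≤ ∫⁻ x, ‖F x‖ₑ ^ 2 := Real.lintegral_enorm_fourier_sq_le hF

theorem gallagher_generalized_supported
    (δ T : ℝ) (hδ : 0 < δ) (hT : 0 < T)
    (w : ℝ → ℂ) (hw : Integrable w)
    (hsupp : Function.support w ⊆ Set.Icc (-δ) δ)
    (ν : ℕ → ℝ) (s : ℕ → ℂ) (hs : Summable (fun k => ‖s k‖))
    (S : ℝ → ℂ)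
    (hS : ∀ t : ℝ, S t = ∑' k, s k * Complex.exp (2 * π * Complex.I * (ν k : ℂ) * (t : ℂ)))
    (m : ℝ)
    (hm : m = sInf ((fun t : ℝ =>
        ‖∫ u : ℝ, w u * Complex.exp (-(2 * π * Complex.I * (u : ℂ) * (t : ℂ)))‖ ^ 2) ''
        Set.Icc (-T) T)) :
    ENNReal.ofReal m * ∫⁻ t in Set.Icc (-T) T, ENNReal.ofReal (‖S t‖ ^ 2) ≤
      ∫⁻ x : ℝ, ENNReal.ofReal (‖∑' k, s k * w (x - ν k)‖ ^ 2) :=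
  gallagher_generalized_supported_general T w hw ν s hs S hS m hm
end

section
/- Let $f : \mathbb{N} \to \mathbb{C}$ and let $p$ be a polynomial of degree $c$. Define $\tilde{f}(n) = f(n) - p(\log n)$ and, for a weight $w$ supported in $[-\delta,\delta]$ with $|w| \le M$, set $A(x) = \sum_n w(n-x)f(n) - p(\log x)\sum_n w(n-x)$ and $B(x) = \sum_n w(n-x)\tilde{f}(n)$ (sums over positive integers $n$ with $|n - x| \le \delta$). Then $\sum_{N < x \le 2N} |A(x)|^2 \ll \sum_{N < x \le 2N} |B(x)|^2 + M^2 N^{-1}\delta^4 (\log 3N)^{2c-2}$, with implied constant depending only on $p$. -/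
open Real Classical

/-!
`A(x) - B(x) = ∑ w(n - x) (p(log n) - p(log x))`. On `[0, log 3N]` the polynomial `p` is
Lipschitz with constant `≪ (log 3N)^(c-1)`, and the logarithmic-mean inequality
`|log n - log x| ≤ 2|n - x| / √(nx)` together with `∑_{|n - x| ≤ δ} n^(-1/2) ≪ δ / √x` gives
`∑_{|n - x| ≤ δ} |log n - log x| ≪ δ² / x`, even when the window reaches down to `n = 1`.
Hence `|A(x)| ≤ |B(x)| + O(M δ² (log 3N)^(c-1) / N)`; squaring and summing over the `N` values
of `x` gives the claim.
-/

open Finset Polynomial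

theorem Polynomial.exists_abs_eval_sub_eval_le (p : ℝ[X]) :
    ∃ C, 0 ≤ C ∧ ∀ {a b R : ℝ}, 1 ≤ R → |a| ≤ R → |b| ≤ R →
      |p.eval a - p.eval b| ≤ C * R ^ (p.natDegree - 1) * |a - b| := by
  refine ⟨∑ i ∈ range (p.natDegree + 1), i * |p.coeff i|,
    sum_nonneg fun i _ ↦ by positivity, fun {a b R} hR ha hb ↦ ?_⟩
  rw [eval_eq_sum_range, eval_eq_sum_range, ← sum_sub_distrib, sum_mul, sum_mul]
  refine (abs_sum_le_sum_abs _ _).trans (sum_le_sum fun i hi ↦ ?_)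
  have hmax : (max |a| |b|) ^ (i - 1) ≤ R ^ (p.natDegree - 1) :=
    (pow_le_pow_left₀ (le_max_of_le_left (abs_nonneg a)) (max_le ha hb) _).trans
      (pow_le_pow_right₀ hR (by have := mem_range.1 hi; omega))
  calc |p.coeff i * a ^ i - p.coeff i * b ^ i|
      = |p.coeff i| * |a ^ i - b ^ i| := by rw [← mul_sub, abs_mul]
    _ ≤ |p.coeff i| * (|a - b| * i * (max |a| |b|) ^ (i - 1)) := by
        gcongr; exact abs_pow_sub_pow_le a b i
    _ ≤ |p.coeff i| * (|a - b| * i * R ^ (p.natDegree - 1)) := by gcongr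
    _ = i * |p.coeff i| * R ^ (p.natDegree - 1) * |a - b| := by ring

/-- The logarithmic mean dominates the geometric mean. -/
theorem Real.abs_log_sub_log_le {u v : ℝ} (hu : 0 < u) (hv : 0 < v) :
    |log u - log v| ≤ 2 * |u - v| / (√u * √v) := by
  wlog hvu : v ≤ u generalizing u v
  · simpa only [abs_sub_comm, mul_comm] using this hv hu (le_of_not_ge hvu)
  obtain ⟨s, hs, rfl⟩ : ∃ s, 0 < s ∧ s ^ 2 = u := ⟨√u, by positivity, sq_sqrt hu.le⟩
  obtain ⟨t, ht, rfl⟩ : ∃ t, 0 < t ∧ t ^ 2 = v := ⟨√v, by positivity, sq_sqrt hv.le⟩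
  have hts : t ≤ s := (pow_le_pow_iff_left₀ ht.le hs.le two_ne_zero).1 hvu
  have hlog : log (s ^ 2) - log (t ^ 2) = 2 * log (s / t) := by
    rw [log_div hs.ne' ht.ne', log_pow, log_pow]; push_cast; ring
  have hlog0 : 0 ≤ log (s / t) := log_nonneg ((one_le_div ht).2 hts)
  rw [sqrt_sq hs.le, sqrt_sq ht.le, hlog, abs_of_nonneg (by positivity),
    abs_of_nonneg (by nlinarith), le_div_iff₀ (by positivity)]
  have hst : 2 * log (s / t) ≤ 2 * (s / t - 1) :=
    mul_le_mul_of_nonneg_left (log_le_sub_one_of_pos (by positivity)) zero_le_two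
  calc 2 * log (s / t) * (s * t) ≤ 2 * (s / t - 1) * (s * t) := by gcongr
    _ = 2 * (s ^ 2 - s * t) := by field_simp
    _ ≤ 2 * (s ^ 2 - t ^ 2) := by nlinarith

theorem sum_Ioc_inv_sqrt_le {a b : ℕ} (hab : a ≤ b) :
    ∑ n ∈ Ioc a b, (√n)⁻¹ ≤ 2 * (√b - √a) := by
  induction b, hab using Nat.le_induction with
  | base => simp
  | succ b hab ih =>
    rw [sum_Ioc_succ_top hab]
    set s := √((b + 1 : ℕ) : ℝ)
    have hs : 0 < s := by positivity
    have hts : √b ≤ s := sqrt_le_sqrt (by push_cast; linarith)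
    have hsq : s ^ 2 - √b ^ 2 = 1 := by
      rw [sq_sqrt (by positivity), sq_sqrt (by positivity)]; push_cast; ring
    -- `1 = (s - √b) (s + √b) ≤ 2 s (s - √b)`
    have hstep : s⁻¹ ≤ 2 * (s - √b) := by
      rw [inv_le_iff_one_le_mul₀ hs]; nlinarith
    linarith

theorem sum_inv_sqrt_le_of_abs_sub_le {S : Finset ℕ} {x : ℕ} {δ : ℝ} (hδ : 1 ≤ δ)
    (hδx : δ < x) (hS : ∀ n ∈ S, |(n : ℝ) - x| ≤ δ) :
    ∑ n ∈ S, (√n)⁻¹ ≤ 6 * δ / √x := by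
  set d := ⌊δ⌋₊
  have hd : (d : ℝ) ≤ δ := Nat.floor_le (by linarith)
  have hd' : δ < d + 1 := Nat.lt_floor_add_one δ
  have hdx : d + 1 ≤ x := by
    have : (d : ℝ) < x := hd.trans_lt hδx
    exact_mod_cast this
  have hSub : S ⊆ Ioc (x - (d + 1)) (x + d) := by
    intro n hn
    obtain ⟨hl, hr⟩ := abs_le.1 (hS n hn)
    have h1 : x < n + d + 1 := by exact_mod_cast (by linarith : (x : ℝ) < n + d + 1)
    have h2 : n < x + d + 1 := by exact_mod_cast (by linarith : (n : ℝ) < x + d + 1)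
    rw [mem_Ioc]; omega
  have hx : (0 : ℝ) < √x := sqrt_pos.2 (by exact_mod_cast (by omega : 0 < x))
  set a := √((x - (d + 1) : ℕ) : ℝ)
  set b := √((x + d : ℕ) : ℝ)
  have hxb : √x ≤ b := sqrt_le_sqrt (by push_cast; linarith)
  have hab : b ^ 2 - a ^ 2 = 2 * d + 1 := by
    rw [sq_sqrt (by positivity), sq_sqrt (by positivity)]; push_cast [Nat.cast_sub hdx]; ring
  -- `b - a = (2d + 1) / (b + a) ≤ 3δ / √x`
  have ha : 0 ≤ a := sqrt_nonneg _
  have hba : 2 * (b - a) ≤ 6 * δ / √x := by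
    rw [le_div_iff₀ hx]
    nlinarith [mul_le_mul_of_nonneg_left hxb ha]
  calc ∑ n ∈ S, (√n)⁻¹ ≤ ∑ n ∈ Ioc (x - (d + 1)) (x + d), (√n)⁻¹ :=
        sum_le_sum_of_subset_of_nonneg hSub fun _ _ _ ↦ by positivity
    _ ≤ 2 * (b - a) := sum_Ioc_inv_sqrt_le (by omega)
    _ ≤ 6 * δ / √x := hba

theorem sum_abs_log_sub_log_le {S : Finset ℕ} {x : ℕ} {δ : ℝ} (hδ : 1 ≤ δ)
    (hδx : δ < x) (hS : ∀ n ∈ S, |(n : ℝ) - x| ≤ δ) :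
    ∑ n ∈ S, |log n - log x| ≤ 12 * δ ^ 2 / x := by
  have hx : (0 : ℝ) < x := by linarith
  have hterm : ∀ n ∈ S, |log n - log x| ≤ 2 * δ / √x * (√n)⁻¹ := by
    intro n hn
    have hn' : (0 : ℝ) < n := by linarith [(abs_le.1 (hS n hn)).1]
    calc |log n - log x| ≤ 2 * |(n : ℝ) - x| / (√n * √x) := abs_log_sub_log_le hn' hx
      _ ≤ 2 * δ / (√n * √x) := by gcongr; exact hS n hn
      _ = 2 * δ / √x * (√n)⁻¹ := by field_simp
  calc ∑ n ∈ S, |log n - log x| ≤ 2 * δ / √x * ∑ n ∈ S, (√n)⁻¹ := by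
        rw [mul_sum]; exact sum_le_sum hterm
    _ ≤ 2 * δ / √x * (6 * δ / √x) := by
        gcongr; exact sum_inv_sqrt_le_of_abs_sub_le hδ hδx hS
    _ = 12 * δ ^ 2 / x := by
        rw [div_mul_div_comm, mul_self_sqrt hx.le]; ring

theorem norm_sum_mul_sub_mul_sum_le {S : Finset ℕ} {x : ℕ} {δ M L : ℝ} {w : ℝ → ℂ}
    {f : ℕ → ℂ} {g : ℝ → ℝ} (hw : ∀ t, ‖w t‖ ≤ M) (hL : 0 ≤ L) (hδ : 1 ≤ δ) (hδx : δ < x)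
    (hS : ∀ n ∈ S, |(n : ℝ) - x| ≤ δ)
    (hg : ∀ n ∈ S, |g (log n) - g (log x)| ≤ L * |log n - log x|) :
    ‖∑ n ∈ S, w (n - x) * f n - (g (log x) : ℂ) * ∑ n ∈ S, w (n - x)‖ ≤
      ‖∑ n ∈ S, w (n - x) * (f n - (g (log n) : ℂ))‖ + M * L * (12 * δ ^ 2 / x) := by
  have hM : 0 ≤ M := (norm_nonneg _).trans (hw 0)
  have hsplit : ∑ n ∈ S, w (n - x) * f n - (g (log x) : ℂ) * ∑ n ∈ S, w (n - x) =
      ∑ n ∈ S, w (n - x) * (f n - (g (log n) : ℂ)) +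
        ∑ n ∈ S, w (n - x) * ((g (log n) - g (log x) : ℝ) : ℂ) := by
    rw [mul_sum, ← sum_sub_distrib, ← sum_add_distrib]
    refine sum_congr rfl fun n _ ↦ ?_
    push_cast; ring
  rw [hsplit]
  refine (norm_add_le _ _).trans (add_le_add_right ?_ _)
  calc ‖∑ n ∈ S, w (n - x) * ((g (log n) - g (log x) : ℝ) : ℂ)‖
      ≤ ∑ n ∈ S, M * (L * |log n - log x|) := by
        refine (norm_sum_le _ _).trans (sum_le_sum fun n hn ↦ ?_)
        rw [norm_mul, Complex.norm_real, Real.norm_eq_abs]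
        exact mul_le_mul (hw _) (hg n hn) (abs_nonneg _) hM
    _ = M * L * ∑ n ∈ S, |log n - log x| := by rw [mul_sum]; simp only [mul_assoc]
    _ ≤ M * L * (12 * δ ^ 2 / x) := by gcongr; exact sum_abs_log_sub_log_le hδ hδx hS

theorem sum_sq_le_two_mul_of_le_add {ι : Type*} {s : Finset ι} {a b : ι → ℝ} {E : ℝ}
    (ha : ∀ i ∈ s, 0 ≤ a i) (h : ∀ i ∈ s, a i ≤ b i + E) :
    ∑ i ∈ s, a i ^ 2 ≤ 2 * (∑ i ∈ s, b i ^ 2 + #s * E ^ 2) := by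
  calc ∑ i ∈ s, a i ^ 2 ≤ ∑ i ∈ s, (2 * b i ^ 2 + 2 * E ^ 2) := by
        refine sum_le_sum fun i hi ↦ ?_
        nlinarith [ha i hi, h i hi, sq_nonneg (b i - E)]
    _ = 2 * (∑ i ∈ s, b i ^ 2 + #s * E ^ 2) := by
        rw [sum_add_distrib, sum_const, nsmul_eq_mul, ← mul_sum]; ring

theorem proposition_one (p : Polynomial ℝ) :
    ∃ K : ℝ, 0 < K ∧
      ∀ (M δ : ℝ) (N : ℕ) (w : ℝ → ℂ) (f : ℕ → ℂ) (A B : ℕ → ℂ),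
        0 ≤ M → (∀ x : ℝ, ‖w x‖ ≤ M) → (∀ x : ℝ, δ < |x| → w x = 0) →
        1 ≤ δ → δ ≤ (N : ℝ) → 0 < N →
        (∀ x : ℕ, A x =
          (∑ n ∈ ((Finset.range (3 * N + 1)).filter
              (fun n => 0 < n ∧ |(n : ℝ) - (x : ℝ)| ≤ δ) : Finset ℕ),
            w ((n : ℝ) - (x : ℝ)) * f n) -
          ((p.eval (Real.log x) : ℝ) : ℂ) *
            ∑ n ∈ ((Finset.range (3 * N + 1)).filter
                (fun n => 0 < n ∧ |(n : ℝ) - (x : ℝ)| ≤ δ) : Finset ℕ),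
              w ((n : ℝ) - (x : ℝ))) →
        (∀ x : ℕ, B x =
          ∑ n ∈ ((Finset.range (3 * N + 1)).filter
              (fun n => 0 < n ∧ |(n : ℝ) - (x : ℝ)| ≤ δ) : Finset ℕ),
            w ((n : ℝ) - (x : ℝ)) * (f n - ((p.eval (Real.log n) : ℝ) : ℂ))) →
        ∑ x ∈ Finset.Ioc N (2 * N), ‖A x‖ ^ 2 ≤
          K * (∑ x ∈ Finset.Ioc N (2 * N), ‖B x‖ ^ 2 +
            M ^ 2 * ((N : ℝ)⁻¹ * δ ^ 4) *
              Real.log (3 * N) ^ (2 * p.natDegree - 2)) := by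
  obtain ⟨C, hC0, hC⟩ := p.exists_abs_eval_sub_eval_le
  refine ⟨2 + 288 * C ^ 2, by positivity, ?_⟩
  intro M δ N w f A B _ hw _ hδ hδN hN hA hB
  set R := log (3 * N)
  have hN1 : (1 : ℝ) ≤ N := by exact_mod_cast hN
  have hR : 1 ≤ R := by
    rw [le_log_iff_exp_le (by positivity)]; linarith [exp_one_lt_d9]
  have hlog : ∀ n : ℕ, 0 < n → n ≤ 3 * N → |log n| ≤ R := fun n hn hnN ↦ by
    rw [abs_of_nonneg (log_natCast_nonneg n)]
    exact log_le_log (by exact_mod_cast hn) (by exact_mod_cast hnN)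
  set E := M * (C * R ^ (p.natDegree - 1)) * (12 * δ ^ 2 / N) with hE_def
  have hAB : ∀ x ∈ Ioc N (2 * N), ‖A x‖ ≤ ‖B x‖ + E := by
    intro x hx
    obtain ⟨hNx, hx2N⟩ := mem_Ioc.1 hx
    have hx : (N : ℝ) < x := by exact_mod_cast hNx
    rw [hA, hB, hE_def]
    refine (norm_sum_mul_sub_mul_sum_le (g := (eval · p)) (L := C * R ^ (p.natDegree - 1))
      hw (by positivity) hδ (hδN.trans_lt hx) (fun n hn ↦ (mem_filter.1 hn).2.2)
      fun n hn ↦ ?_).trans (by gcongr)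
    obtain ⟨hn3, hn0, -⟩ := mem_filter.1 hn
    exact hC hR (hlog n hn0 (Nat.lt_succ_iff.1 (mem_range.1 hn3))) (hlog x (by omega) (by omega))
  refine (sum_sq_le_two_mul_of_le_add (fun _ _ ↦ norm_nonneg _) hAB).trans ?_
  have hE : (#(Ioc N (2 * N)) : ℝ) * E ^ 2 =
      144 * C ^ 2 * (M ^ 2 * ((N : ℝ)⁻¹ * δ ^ 4) * R ^ (2 * p.natDegree - 2)) := by
    rw [Nat.card_Ioc, show 2 * N - N = N by omega, show 2 * p.natDegree - 2 =
      (p.natDegree - 1) + (p.natDegree - 1) by omega, pow_add, hE_def]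
    field_simp
    ring
  have hB0 : 0 ≤ ∑ x ∈ Ioc N (2 * N), ‖B x‖ ^ 2 := sum_nonneg fun _ _ ↦ by positivity
  rw [hE]
  have hT : 0 ≤ M ^ 2 * ((N : ℝ)⁻¹ * δ ^ 4) * R ^ (2 * p.natDegree - 2) := by positivity
  nlinarith [mul_nonneg (sq_nonneg C) hB0]
end
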